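/- (Split Short Five Lemma for stably strong points.) Let (X,P_X), (B,P_B), (X',P_{X'}), (B',P_{B'}) be preordered groups, φ an action of B on X and φ' an action of B' on X' by group automorphisms, each admitting compatible cones, and equip X ⋊_φ B and X' ⋊_{φ'} B' with their minimal compatible cones P and P' (the smallest conjugation-closed submonoids containing P_X × P_B and P_{X'} × P_{B'}, respectively). Suppose a : X → X', b : X ⋊_φ B → X' ⋊_{φ'} B', c : B → B' are monotone group homomorphisms (a(P_X) ⊆ P_{X'}, b(P) ⊆ P', c(P_B) ⊆ P_{B'}) such that b(x,0) = (a(x),0) for all x ∈ X, π₂'∘b = c∘π₂, and b(0,β) = (0,c(β)) for all β ∈ B. If a and c are isomorphisms of preordered groups (group isomorphisms with a(P_X) = P_{X'} and c(P_B) = P_{B'}), then b is an isomorphism of preordered groups (a group isomorphism with b(P) = P'). -/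

import Mathlib

namespace PreordGrp

/-- A positive cone on an additive group: a submonoid closed under conjugation.
It induces the preorder `x ≤ y ↔ -x + y ∈ P`. -/
def IsCone {G : Type*} [AddGroup G] (P : Set G) : Prop :=
  (0 : G) ∈ P ∧ (∀ x ∈ P, ∀ y ∈ P, x + y ∈ P) ∧ ∀ x ∈ P, ∀ a : G, a + x - a ∈ P

/-- `x ≤ y` in the preorder induced by the cone `P`. -/
def coneLe {G : Type*} [AddGroup G] (P : Set G) (x y : G) : Prop := -x + y ∈ P

/-- `x ~ y` : both `x ≤ y` and `y ≤ x` in the preorder induced by `P`. -/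
def coneSim {G : Type*} [AddGroup G] (P : Set G) (x y : G) : Prop :=
  coneLe P x y ∧ coneLe P y x

section SDP

variable {X B : Type*} [AddGroup X] [AddGroup B]

/-- An action of `B` on `X` by group automorphisms:
`φ 0 = id` and `φ (b + b') = φ b ∘ φ b'`. -/
def IsAction (φ : B → X ≃+ X) : Prop :=
  (∀ x : X, φ 0 x = x) ∧ ∀ b b' : B, ∀ x : X, φ (b + b') x = φ b (φ b' x)

/-- Addition in the semidirect product `X ⋊_φ B`:
`(x, b) + (x', b') = (x + φ b x', b + b')`. -/
def sAdd (φ : B → X ≃+ X) (p q : X × B) : X × B := (p.1 + φ p.2 q.1, p.2 + q.2)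

/-- Negation in the semidirect product `X ⋊_φ B`. -/
def sNeg (φ : B → X ≃+ X) (p : X × B) : X × B := (-(φ (-p.2) p.1), -p.2)

/-- A positive cone on `X ⋊_φ B`: contains `0`, closed under addition and
under conjugation `p ↦ g + p - g`. -/
def IsSCone (φ : B → X ≃+ X) (P : Set (X × B)) : Prop :=
  ((0, 0) : X × B) ∈ P ∧ (∀ p ∈ P, ∀ q ∈ P, sAdd φ p q ∈ P) ∧
    ∀ p ∈ P, ∀ g : X × B, sAdd φ (sAdd φ g p) (sNeg φ g) ∈ P

/-- A compatible positive cone `P` on `X ⋊_φ B`: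
(a) `(x, b) ∈ P → b ∈ PB`, (b) `(x, 0) ∈ P ↔ x ∈ PX`, (c) `b ∈ PB → (0, b) ∈ P`. -/
def IsCompatible (φ : B → X ≃+ X) (PX : Set X) (PB : Set B) (P : Set (X × B)) : Prop :=
  IsSCone φ P ∧ (∀ x b, (x, b) ∈ P → b ∈ PB) ∧
    (∀ x : X, (x, (0 : B)) ∈ P ↔ x ∈ PX) ∧ ∀ b ∈ PB, ((0 : X), b) ∈ P

/-- The lexicographic cone: `(x, b)` with `b > 0`, or `b ~ 0` and `x ∈ PX`. -/
def lexCone (PX : Set X) (PB : Set B) : Set (X × B) :=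
  {p | (p.2 ∈ PB ∧ -p.2 ∉ PB) ∨ (p.2 ∈ PB ∧ -p.2 ∈ PB ∧ p.1 ∈ PX)}

/-- The smallest positive cone (conjugation-closed submonoid) of `X ⋊_φ B`
containing the product cone `PX ×ˢ PB`. -/
def genCone (φ : B → X ≃+ X) (PX : Set X) (PB : Set B) : Set (X × B) :=
  ⋂₀ {Q : Set (X × B) | IsSCone φ Q ∧ PX ×ˢ PB ⊆ Q}

end SDP

/-!
Writing `(x, β) = (x, 0) + (0, β)` shows that `bm` is the product map `a × c`, hence bijective.
Being a surjective homomorphism, `bm` carries the cone `P` to a conjugation-closed submonoid,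
which contains `a '' PX ×ˢ c '' PB = PX' ×ˢ PB'` and therefore the minimal cone `P'`.
-/

section GenCone

variable {X B : Type*} [AddGroup X] [AddGroup B] (φ : B → X ≃+ X) (PX : Set X) (PB : Set B)

theorem isSCone_genCone : IsSCone φ (genCone φ PX PB) :=
  ⟨fun _ hQ ↦ hQ.1.1,
    fun p hp q hq Q hQ ↦ hQ.1.2.1 p (hp Q hQ) q (hq Q hQ),
    fun p hp g Q hQ ↦ hQ.1.2.2 p (hp Q hQ) g⟩

theorem prod_subset_genCone : PX ×ˢ PB ⊆ genCone φ PX PB :=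
  fun _ hp _ hQ ↦ hQ.2 hp

variable {φ PX PB}

theorem genCone_subset {Q : Set (X × B)} (hQ : IsSCone φ Q) (hsub : PX ×ˢ PB ⊆ Q) :
    genCone φ PX PB ⊆ Q :=
  Set.sInter_subset_of_mem ⟨hQ, hsub⟩

end GenCone

section SNeg

variable {X B : Type*} [AddGroup X] [AddGroup B]

theorem sAdd_sNeg_self (φ : B → X ≃+ X) (p : X × B) : sAdd φ (sNeg φ p) p = (0, 0) := by
  simp [sAdd, sNeg]

theorem eq_sNeg_of_sAdd_eq_zero (φ : B → X ≃+ X) {p q : X × B} (h : sAdd φ p q = (0, 0)) :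
    p = sNeg φ q := by
  obtain ⟨h₁, h₂⟩ := Prod.mk.inj h
  have hp₂ : p.2 = -q.2 := eq_neg_of_add_eq_zero_left h₂
  refine Prod.ext ?_ hp₂
  rw [sNeg, ← hp₂]
  exact eq_neg_of_add_eq_zero_left h₁

end SNeg

section Hom

variable {X B X' B' : Type*} [AddGroup X] [AddGroup B] [AddGroup X'] [AddGroup B']
  {φ : B → X ≃+ X} {φ' : B' → X' ≃+ X'} {f : X × B → X' × B'}

theorem map_zero_of_map_sAdd (hf : ∀ p q, f (sAdd φ p q) = sAdd φ' (f p) (f q)) :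
    f (0, 0) = (0, 0) := by
  have h := hf (0, 0) (0, 0)
  simp only [sAdd, map_zero, add_zero] at h
  have h₂ : (f (0, 0)).2 = 0 := by simpa using congrArg Prod.snd h
  have h₁ : φ' (f (0, 0)).2 (f (0, 0)).1 = 0 := by simpa using congrArg Prod.fst h
  rw [h₂, AddEquiv.map_eq_zero_iff] at h₁
  exact Prod.ext h₁ h₂

theorem map_sNeg_of_map_sAdd (hf : ∀ p q, f (sAdd φ p q) = sAdd φ' (f p) (f q)) (p : X × B) :
    f (sNeg φ p) = sNeg φ' (f p) :=
  eq_sNeg_of_sAdd_eq_zero φ' <| by rw [← hf, sAdd_sNeg_self, map_zero_of_map_sAdd hf]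

theorem eq_prodMap_of_map_sAdd {a : X → X'} {c : B → B'}
    (hf : ∀ p q, f (sAdd φ p q) = sAdd φ' (f p) (f q))
    (hfX : ∀ x, f (x, 0) = (a x, 0)) (hfB : ∀ β, f (0, β) = (0, c β)) :
    f = Prod.map a c := by
  funext ⟨x, β⟩
  have h := hf (x, 0) (0, β)
  simp only [sAdd, map_zero, add_zero, zero_add, hfX, hfB] at h
  exact h

theorem IsSCone.image_of_surjective (hf : ∀ p q, f (sAdd φ p q) = sAdd φ' (f p) (f q))
    (hsurj : Function.Surjective f) {Q : Set (X × B)} (hQ : IsSCone φ Q) :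
    IsSCone φ' (f '' Q) := by
  obtain ⟨hQ0, hQadd, hQconj⟩ := hQ
  refine ⟨⟨(0, 0), hQ0, map_zero_of_map_sAdd hf⟩, ?_, ?_⟩
  · rintro _ ⟨p, hp, rfl⟩ _ ⟨q, hq, rfl⟩
    exact ⟨sAdd φ p q, hQadd p hp q hq, hf p q⟩
  · rintro _ ⟨p, hp, rfl⟩ g'
    obtain ⟨g, rfl⟩ := hsurj g'
    exact ⟨_, hQconj p hp g, by rw [hf, hf, map_sNeg_of_map_sAdd hf]⟩

end Hom

theorem stmt13_general {X B X' B' : Type*}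
    [AddGroup X] [AddGroup B] [AddGroup X'] [AddGroup B']
    (PX : Set X) (PB : Set B) (PX' : Set X') (PB' : Set B')
    (φ : B → X ≃+ X) (φ' : B' → X' ≃+ X')
    (P : Set (X × B)) (hP : P = genCone φ PX PB)
    (P' : Set (X' × B')) (hP' : P' = genCone φ' PX' PB')
    (a : X → X')
    (bm : X × B → X' × B')
    (hbadd : ∀ p q : X × B, bm (sAdd φ p q) = sAdd φ' (bm p) (bm q))
    (hbmono : ∀ p ∈ P, bm p ∈ P')
    (c : B → B')
    (hbk : ∀ x : X, bm (x, 0) = (a x, 0))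
    (hbs : ∀ β : B, bm ((0 : X), β) = ((0 : X'), c β))
    (haiso : Function.Bijective a) (haim : a '' PX = PX')
    (hciso : Function.Bijective c) (hcim : c '' PB = PB') :
    Function.Bijective bm ∧ bm '' P = P' := by
  subst hP hP'
  have hbm : bm = Prod.map a c := eq_prodMap_of_map_sAdd hbadd hbk hbs
  have hbij : Function.Bijective bm := hbm ▸ haiso.prodMap hciso
  refine ⟨hbij, Set.Subset.antisymm (Set.image_subset_iff.2 hbmono) (genCone_subset ?_ ?_)⟩
  · exact (isSCone_genCone φ PX PB).image_of_surjective hbadd hbij.2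
  · rw [← haim, ← hcim, ← Set.prodMap_image_prod, ← hbm]
    exact Set.image_mono (prod_subset_genCone φ PX PB)

/-- Split Short Five Lemma for stably strong points: given two
split extensions equipped with their minimal compatible cones and a morphism
`(a, bm, c)` between them with `a` and `c` isomorphisms of preordered groups,
the middle map `bm` is an isomorphism of preordered groups. -/
theorem stmt13 {X B X' B' : Type*}
    [AddGroup X] [AddGroup B] [AddGroup X'] [AddGroup B']
    (PX : Set X) (PB : Set B) (PX' : Set X') (PB' : Set B')
    (hPX : IsCone PX) (hPB : IsCone PB) (hPX' : IsCone PX') (hPB' : IsCone PB')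
    (φ : B → X ≃+ X) (φ' : B' → X' ≃+ X') (hφ : IsAction φ) (hφ' : IsAction φ')
    (hex : ∃ P : Set (X × B), IsCompatible φ PX PB P)
    (hex' : ∃ P' : Set (X' × B'), IsCompatible φ' PX' PB' P')
    (P : Set (X × B)) (hP : P = genCone φ PX PB)
    (P' : Set (X' × B')) (hP' : P' = genCone φ' PX' PB')
    (a : X → X') (haadd : ∀ x y : X, a (x + y) = a x + a y)
    (hamono : ∀ x ∈ PX, a x ∈ PX')
    (bm : X × B → X' × B')
    (hbadd : ∀ p q : X × B, bm (sAdd φ p q) = sAdd φ' (bm p) (bm q))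
    (hbmono : ∀ p ∈ P, bm p ∈ P')
    (c : B → B') (hcadd : ∀ x y : B, c (x + y) = c x + c y)
    (hcmono : ∀ b ∈ PB, c b ∈ PB')
    (hbk : ∀ x : X, bm (x, 0) = (a x, 0))
    (hbp : ∀ p : X × B, (bm p).2 = c p.2)
    (hbs : ∀ β : B, bm ((0 : X), β) = ((0 : X'), c β))
    (haiso : Function.Bijective a) (haim : a '' PX = PX')
    (hciso : Function.Bijective c) (hcim : c '' PB = PB') :
    Function.Bijective bm ∧ bm '' P = P' :=
  stmt13_general PX PB PX' PB' φ φ' P hP P' hP' a bm hbadd hbmono c hbk hbs haiso haim hciso hcim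

end PreordGrp
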